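/- arXiv:2010.01887 — 3 statements merged into one kernel-verified Lean document; each statement's English description precedes it below -/
import Mathlib

section
/- Let f : ℝ^d → ℝ admit the Fourier representation f(x) = ∫_{ℝ^d} f̂(ω) e^{iω·x} dω with f̂ ∈ L¹(ℝ^d), let p be a probability density on ℝ^d with p(ω) > 0 for a.e. ω with f̂(ω) ≠ 0 and ∫ |f̂(ω)|²/p(ω) dω < ∞, and let ω_1, …, ω_K be i.i.d. with density p. Then for every x ∈ ℝ^d, E_ω[ | f(x) − Re( K^{-1} Σ_{k=1}^K f̂(ω_k) e^{iω_k·x} / p(ω_k) ) |² ] ≤ K^{-1} ∫_{ℝ^d} |f̂(ω)|²/p(ω) dω. -/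
open MeasureTheory ProbabilityTheory

/-! The random feature `g ω = Re (f̂ ω e^{iω·x} / p ω)` is an importance-sampling estimator of
`f x`: under the law `p(ω) dω` its mean is `Re ∫ f̂(ω) e^{iω·x} dω = f x` and its second moment
is at most `∫ |f̂|²/p`. The network output is the average of `K` independent copies of `g`, so
its mean-square error is its variance, at most `1/K` times the second moment of `g`. -/

theorem integral_sq_average_sub_le {Ω ι : Type*} [MeasurableSpace Ω] {P : Measure Ω}
    [IsProbabilityMeasure P] [Fintype ι] [Nonempty ι] {X : ι → Ω → ℝ}
    (hX : ∀ i, MemLp (X i) 2 P) (hindep : Pairwise fun i j => X i ⟂ᵢ[P] X j) {m B : ℝ}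
    (hmean : ∀ i, P[X i] = m) (hvar : ∀ i, Var[X i; P] ≤ B) :
    ∫ w, ((∑ i, X i w) / Fintype.card ι - m) ^ 2 ∂P ≤ B / Fintype.card ι := by
  set n : ℝ := (Fintype.card ι : ℝ)
  have hn : 0 < n := by positivity
  set S : Ω → ℝ := ∑ i, X i
  have hS : MemLp S 2 P := memLp_finsetSum' _ fun i _ => hX i
  have hSvar : Var[S; P] = ∑ i, Var[X i; P] :=
    IndepFun.variance_sum (fun i _ => hX i) fun i _ j _ hij => hindep hij
  have hSmean : P[fun w => S w / n] = m := by
    simp_rw [integral_div, S, Finset.sum_apply,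
      integral_finsetSum _ fun i _ => (hX i).integrable one_le_two, hmean]
    simp [n]
  calc ∫ w, ((∑ i, X i w) / n - m) ^ 2 ∂P = Var[fun w => S w / n; P] := by
        rw [variance_eq_integral (hS.aemeasurable.div_const n), hSmean]
        simp [S, Finset.sum_apply]
    _ = (∑ i, Var[X i; P]) / n ^ 2 := by
        simp_rw [div_eq_mul_inv, variance_mul_const, hSvar, inv_pow]
    _ ≤ (n * B) / n ^ 2 := by
        gcongr
        simpa [n] using Finset.sum_le_sum fun i (_ : i ∈ Finset.univ) => hvar i
    _ = B / n := by field_simp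

theorem integral_sq_average_comp_sub_le {Ω ι E : Type*} [MeasurableSpace Ω] {P : Measure Ω}
    [IsProbabilityMeasure P] [Fintype ι] [Nonempty ι] [MeasurableSpace E] {μ : Measure E}
    {ω : ι → Ω → E} (hω : ∀ i, AEMeasurable (ω i) P) (hlaw : ∀ i, P.map (ω i) = μ)
    (hindep : iIndepFun ω P) {g : E → ℝ} (hg : MemLp g 2 μ) :
    ∫ w, ((∑ i, g (ω i w)) / Fintype.card ι - ∫ y, g y ∂μ) ^ 2 ∂P
      ≤ (∫ y, g y ^ 2 ∂μ) / Fintype.card ι := by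
  have hg' : ∀ i, AEStronglyMeasurable g (P.map (ω i)) := fun i => hlaw i ▸ hg.1
  refine integral_sq_average_sub_le (X := fun i => g ∘ ω i)
    (fun i => (memLp_map_measure_iff (hg' i) (hω i)).1 (hlaw i ▸ hg))
    (fun i j hij => (hindep.comp₀ _ hω fun i => (hg' i).aemeasurable).indepFun hij)
    (fun i => ?_) (fun i => ?_)
  · rw [← hlaw i, integral_map (hω i) (hg' i)]
    rfl
  · refine (variance_le_expectation_sq ((hg' i).comp_aemeasurable (hω i))).trans_eq ?_
    rw [← hlaw i]
    exact (integral_map (hω i) ((hg' i).pow 2)).symm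

theorem mul_re_div_ofReal {c : ℂ} {p : ℝ} (h : c ≠ 0 → p ≠ 0) : p * (c / p).re = c.re := by
  rcases eq_or_ne c 0 with rfl | hc
  · simp
  · rw [← Complex.re_ofReal_mul, mul_div_cancel₀ _ (Complex.ofReal_ne_zero.2 (h hc))]

theorem mul_re_div_ofReal_sq_le {c : ℂ} {p : ℝ} (h : c ≠ 0 → 0 < p) :
    p * (c / p).re ^ 2 ≤ ‖c‖ ^ 2 / p := by
  rcases eq_or_ne c 0 with rfl | hc
  · simp
  have hp := h hc
  calc p * (c / p).re ^ 2 ≤ p * ‖c / p‖ ^ 2 := by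
        gcongr p * ?_
        rw [sq, Complex.sq_norm]
        exact Complex.re_sq_le_normSq _
    _ = ‖c‖ ^ 2 / p := by
        rw [norm_div, Complex.norm_real, Real.norm_of_nonneg hp.le]
        field_simp

section ImportanceSampling

variable {E : Type*} [MeasurableSpace E] {ν : Measure E} {p : E → ℝ} {c : E → ℂ}

theorem integral_withDensity_ofReal (hp : Measurable p) (hp0 : ∀ y, 0 ≤ p y) (h : E → ℝ) :
    ∫ y, h y ∂ν.withDensity (fun y => ENNReal.ofReal (p y)) = ∫ y, p y * h y ∂ν := by
  rw [integral_withDensity_eq_integral_toReal_smul hp.ennreal_ofReal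
    (.of_forall fun _ => ENNReal.ofReal_lt_top)]
  simp [ENNReal.toReal_ofReal (hp0 _)]

theorem integrable_withDensity_ofReal_iff (hp : Measurable p) (hp0 : ∀ y, 0 ≤ p y)
    {h : E → ℝ} :
    Integrable h (ν.withDensity fun y => ENNReal.ofReal (p y))
      ↔ Integrable (fun y => p y * h y) ν := by
  rw [integrable_withDensity_iff_integrable_smul' hp.ennreal_ofReal
    (.of_forall fun _ => ENNReal.ofReal_lt_top)]
  simp [ENNReal.toReal_ofReal (hp0 _)]

theorem integral_re_div_withDensity_ofReal (hp : Measurable p) (hp0 : ∀ y, 0 ≤ p y)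
    (hpos : ∀ᵐ y ∂ν, c y ≠ 0 → 0 < p y) (hc : Integrable c ν) :
    ∫ y, (c y / p y).re ∂ν.withDensity (fun y => ENNReal.ofReal (p y)) = (∫ y, c y ∂ν).re := by
  rw [integral_withDensity_ofReal hp hp0]
  exact (integral_congr_ae (hpos.mono fun y hy => mul_re_div_ofReal fun h => (hy h).ne')).trans
    (integral_re hc)

theorem integrable_mul_re_div_ofReal_sq (hp : Measurable p) (hp0 : ∀ y, 0 ≤ p y)
    (hpos : ∀ᵐ y ∂ν, c y ≠ 0 → 0 < p y) (hc : AEStronglyMeasurable c ν)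
    (hA : Integrable (fun y => ‖c y‖ ^ 2 / p y) ν) :
    Integrable (fun y => p y * (c y / p y).re ^ 2) ν := by
  refine hA.mono' ?_ (hpos.mono fun y hy => ?_)
  · exact hp.aestronglyMeasurable.mul
      ((Complex.continuous_re.comp_aestronglyMeasurable
        (hc.div₀ (Complex.measurable_ofReal.comp hp).aestronglyMeasurable)).pow 2)
  · rw [Real.norm_of_nonneg (mul_nonneg (hp0 y) (sq_nonneg _))]
    exact mul_re_div_ofReal_sq_le hy

theorem memLp_re_div_withDensity_ofReal (hp : Measurable p) (hp0 : ∀ y, 0 ≤ p y)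
    (hpos : ∀ᵐ y ∂ν, c y ≠ 0 → 0 < p y) (hc : AEStronglyMeasurable c ν)
    (hA : Integrable (fun y => ‖c y‖ ^ 2 / p y) ν) :
    MemLp (fun y => (c y / p y).re) 2 (ν.withDensity fun y => ENNReal.ofReal (p y)) := by
  refine (memLp_two_iff_integrable_sq ?_).2 ?_
  · exact Complex.continuous_re.comp_aestronglyMeasurable
      ((hc.div₀ (Complex.measurable_ofReal.comp hp).aestronglyMeasurable).mono_ac
        (withDensity_absolutelyContinuous _ _))
  · exact (integrable_withDensity_ofReal_iff hp hp0).2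
      (integrable_mul_re_div_ofReal_sq hp hp0 hpos hc hA)

theorem integral_re_div_sq_withDensity_ofReal_le (hp : Measurable p) (hp0 : ∀ y, 0 ≤ p y)
    (hpos : ∀ᵐ y ∂ν, c y ≠ 0 → 0 < p y) (hc : AEStronglyMeasurable c ν)
    (hA : Integrable (fun y => ‖c y‖ ^ 2 / p y) ν) :
    ∫ y, (c y / p y).re ^ 2 ∂ν.withDensity (fun y => ENNReal.ofReal (p y))
      ≤ ∫ y, ‖c y‖ ^ 2 / p y ∂ν := by
  rw [integral_withDensity_ofReal hp hp0]
  exact integral_mono_ae (integrable_mul_re_div_ofReal_sq hp hp0 hpos hc hA) hA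
    (hpos.mono fun y hy => mul_re_div_ofReal_sq_le hy)

end ImportanceSampling

theorem random_fourier_features_pointwise_bound_general
    {Ω : Type*} [MeasurableSpace Ω] (P : Measure Ω) [IsProbabilityMeasure P]
    (d K : ℕ) (hK : 0 < K)
    (f : (Fin d → ℝ) → ℝ) (fhat : (Fin d → ℝ) → ℂ)
    (hfhatint : Integrable fhat volume)
    (hf : ∀ x : Fin d → ℝ, (f x : ℂ)
      = ∫ y : Fin d → ℝ, fhat y * Complex.exp (Complex.I * ((∑ i, y i * x i : ℝ) : ℂ)))
    (p : (Fin d → ℝ) → ℝ) (hpmeas : Measurable p) (hpnonneg : ∀ x, 0 ≤ p x)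
    (hpos : ∀ᵐ x ∂(volume : Measure (Fin d → ℝ)), fhat x ≠ 0 → 0 < p x)
    (hA : Integrable (fun x => ‖fhat x‖ ^ 2 / p x) volume)
    (ω : Fin K → Ω → (Fin d → ℝ)) (hωmeas : ∀ k, Measurable (ω k))
    (hlaw : ∀ k, Measure.map (ω k) P
      = volume.withDensity (fun x => ENNReal.ofReal (p x)))
    (hindep : iIndepFun ω P) :
    ∀ x : Fin d → ℝ,
      ∫ w, (f x - ((∑ k, fhat (ω k w) / (p (ω k w) : ℂ)
            * Complex.exp (Complex.I * ((∑ i, ω k w i * x i : ℝ) : ℂ))) / (K : ℂ)).re) ^ 2 ∂P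
        ≤ (∫ y, ‖fhat y‖ ^ 2 / p y) / K := by
  intro x
  have : Nonempty (Fin K) := ⟨⟨0, hK⟩⟩
  set e : (Fin d → ℝ) → ℂ := fun y => Complex.exp (Complex.I * ((∑ i, y i * x i : ℝ) : ℂ))
  have he : ∀ y, ‖e y‖ = 1 := fun y => by
    simpa only [e, mul_comm Complex.I] using Complex.norm_exp_ofReal_mul_I _
  set c : (Fin d → ℝ) → ℂ := fun y => fhat y * e y
  have hc : Integrable c volume := hfhatint.mul_bdd (by fun_prop) (.of_forall fun y => (he y).le)
  have hcnorm : ∀ y, ‖c y‖ = ‖fhat y‖ := fun y => by simp only [c, norm_mul, he, mul_one]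
  have hcpos : ∀ᵐ y, c y ≠ 0 → 0 < p y := hpos.mono fun y hy h => hy (left_ne_zero_of_mul h)
  have hA' : Integrable (fun y => ‖c y‖ ^ 2 / p y) volume := by simpa only [hcnorm] using hA
  have hmc := integral_sq_average_comp_sub_le (fun k => (hωmeas k).aemeasurable) hlaw hindep
    (memLp_re_div_withDensity_ofReal hpmeas hpnonneg hcpos hc.1 hA')
  rw [integral_re_div_withDensity_ofReal hpmeas hpnonneg hcpos hc, ← hf x, Complex.ofReal_re,
    Fintype.card_fin] at hmc
  calc _ = ∫ w, ((∑ k, (c (ω k w) / p (ω k w)).re) / K - f x) ^ 2 ∂P := by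
        congr with w
        simp only [Complex.div_natCast_re, Complex.re_sum, c, e, div_mul_eq_mul_div]
        ring
    _ ≤ (∫ y, (c y / p y).re ^ 2 ∂volume.withDensity fun y => ENNReal.ofReal (p y)) / K := hmc
    _ ≤ (∫ y, ‖fhat y‖ ^ 2 / p y) / K := by
        gcongr
        simpa only [hcnorm] using
          integral_re_div_sq_withDensity_ofReal_le hpmeas hpnonneg hcpos hc.1 hA'

/-- Pointwise generalization error bound for one-hidden-layer random Fourier features:
if `f(x) = ∫ f̂(ω) e^{iω·x} dω` with `f̂ ∈ L¹`, `p` is a probability density positive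
a.e. on `{f̂ ≠ 0}` with `∫ |f̂|²/p < ∞`, and `ω 0, …, ω (K-1)` are i.i.d. with density `p`,
then for every `x`,
`E[|f x - Re (K⁻¹ ∑ k, f̂(ω k) e^{i ω k · x} / p (ω k))|²] ≤ K⁻¹ ∫ |f̂|²/p`. -/
theorem random_fourier_features_pointwise_bound
    {Ω : Type*} [MeasurableSpace Ω] (P : Measure Ω) [IsProbabilityMeasure P]
    (d K : ℕ) (hK : 0 < K)
    (f : (Fin d → ℝ) → ℝ) (fhat : (Fin d → ℝ) → ℂ)
    (hfhatint : Integrable fhat volume)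
    (hf : ∀ x : Fin d → ℝ, (f x : ℂ)
      = ∫ y : Fin d → ℝ, fhat y * Complex.exp (Complex.I * ((∑ i, y i * x i : ℝ) : ℂ)))
    (p : (Fin d → ℝ) → ℝ) (hpmeas : Measurable p) (hpnonneg : ∀ x, 0 ≤ p x)
    (hpprob : ∫⁻ x, ENNReal.ofReal (p x) = 1)
    (hpos : ∀ᵐ x ∂(volume : Measure (Fin d → ℝ)), fhat x ≠ 0 → 0 < p x)
    (hA : Integrable (fun x => ‖fhat x‖ ^ 2 / p x) volume)
    (ω : Fin K → Ω → (Fin d → ℝ)) (hωmeas : ∀ k, Measurable (ω k))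
    (hlaw : ∀ k, Measure.map (ω k) P
      = volume.withDensity (fun x => ENNReal.ofReal (p x)))
    (hindep : iIndepFun ω P) :
    ∀ x : Fin d → ℝ,
      ∫ w, (f x - ((∑ k, fhat (ω k w) / (p (ω k w) : ℂ)
            * Complex.exp (Complex.I * ((∑ i, ω k w i * x i : ℝ) : ℂ))) / (K : ℂ)).re) ^ 2 ∂P
        ≤ (∫ y, ‖fhat y‖ ^ 2 / p y) / K :=
  random_fourier_features_pointwise_bound_general P d K hK f fhat hfhatint hf p hpmeas hpnonneg hpos
    hA ω hωmeas hlaw hindep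
end

section
/- Let f : ℝ^d → ℝ admit the Fourier representation f(x) = ∫_{ℝ^d} f̂(ω) e^{iω·x} dω with f̂ ∈ L¹(ℝ^d) and ‖f̂‖_{L¹} > 0, and let μ be a probability measure on ℝ^d. Then for every K ≥ 1 there exist frequencies ω_1, …, ω_K ∈ ℝ^d and amplitudes c_1, …, c_K ∈ ℂ such that ∫_{ℝ^d} | f(x) − Re Σ_{k=1}^K c_k e^{iω_k·x} |² dμ(x) ≤ ‖f̂‖²_{L¹(ℝ^d)} / K. -/
/-!
Write `f̂ = ‖f̂‖ e^{i arg f̂}` and let `P` be the probability measure with density `‖f̂‖ / ‖f̂‖₁`.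
Then `f x` is the `P`-mean of the feature `g(ω, x) = ‖f̂‖₁ Re (e^{i arg f̂(ω)} e^{iω·x})`, which is
bounded by `‖f̂‖₁`. The empirical mean of `g` over `K` independent samples from `P` has variance at
most `‖f̂‖₁² / K` at every `x`; integrating over `μ` and exchanging the integrals (Fubini), the
expected squared `L²(μ)` error is at most `‖f̂‖₁² / K`, so some sample does at least as well, and
that empirical mean is a network with `K` nodes (Maurey's empirical method).
-/
open MeasureTheory ProbabilityTheory

section EmpiricalMean

variable {Ω : Type*} [MeasurableSpace Ω] {P : Measure Ω} [IsProbabilityMeasure P]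

lemma integrable_empiricalMean {u : Ω → ℝ} (hu : Integrable u P) (K : ℕ) :
    Integrable (fun W : Fin K → Ω => (∑ k, u (W k)) / K) (Measure.pi fun _ => P) :=
  (integrable_finsetSum _ fun _ _ => integrable_comp_eval hu).div_const _

lemma integral_empiricalMean {u : Ω → ℝ} (hu : Integrable u P) {K : ℕ} (hK : K ≠ 0) :
    ∫ W : Fin K → Ω, (∑ k, u (W k)) / K ∂(Measure.pi fun _ => P) = ∫ ω, u ω ∂P := by
  rw [integral_div, integral_finsetSum _ fun k _ => integrable_comp_eval hu]
  simp_rw [integral_comp_eval (μ := fun _ => P) hu.aestronglyMeasurable]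
  simp [hK]

lemma variance_empiricalMean {u : Ω → ℝ} (hu : MemLp u 2 P) (K : ℕ) :
    Var[fun W : Fin K → Ω => (∑ k, u (W k)) / K; Measure.pi fun _ => P] = Var[u; P] / K := by
  simp_rw [div_eq_mul_inv, variance_mul_const]
  rw [← Finset.sum_fn, variance_sum_pi fun _ => hu, Finset.sum_const, Finset.card_univ,
    Fintype.card_fin, nsmul_eq_mul]
  field_simp

lemma integral_sq_integral_sub_empiricalMean {u : Ω → ℝ} (hu : MemLp u 2 P) {K : ℕ}
    (hK : K ≠ 0) :
    ∫ W : Fin K → Ω, (∫ ω, u ω ∂P - (∑ k, u (W k)) / K) ^ 2 ∂(Measure.pi fun _ => P)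
      = Var[u; P] / K := by
  have hint := hu.integrable one_le_two
  rw [← variance_empiricalMean hu,
    variance_eq_integral (integrable_empiricalMean hint K).aemeasurable,
    integral_empiricalMean hint hK]
  simp_rw [sub_sq_comm]

end EmpiricalMean

section Maurey

variable {Ω X : Type*} [MeasurableSpace Ω] [MeasurableSpace X] {P : Measure Ω}
  [IsProbabilityMeasure P] {μ : Measure X} [IsProbabilityMeasure μ]

theorem exists_integral_sq_integral_sub_empiricalMean_le {g : Ω → X → ℝ}
    (hg : Measurable (Function.uncurry g)) {C : ℝ} (hC : ∀ ω x, |g ω x| ≤ C) {K : ℕ}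
    (hK : K ≠ 0) :
    ∃ W : Fin K → Ω, ∫ x, (∫ ω, g ω x ∂P - (∑ k, g (W k) x) / K) ^ 2 ∂μ ≤ C ^ 2 / K := by
  set Q := Measure.pi fun _ : Fin K => P
  set H : (Fin K → Ω) × X → ℝ := fun p => (∫ ω, g ω p.2 ∂P - (∑ k, g (p.1 k) p.2) / K) ^ 2
  have hH_meas : Measurable H := by
    have hint : Measurable fun p : (Fin K → Ω) × X => ∫ ω, g ω p.2 ∂P :=
      (hg.stronglyMeasurable.integral_prod_left' (μ := P)).measurable.comp measurable_snd
    have hterm (k : Fin K) : Measurable fun p : (Fin K → Ω) × X => g (p.1 k) p.2 :=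
      hg.comp (f := fun p : (Fin K → Ω) × X => (p.1 k, p.2)) (by fun_prop)
    exact (hint.sub ((Finset.measurable_sum _ fun k _ => hterm k).div_const _)).pow_const 2
  have hH_bound (p) : ‖H p‖ ≤ (2 * C) ^ 2 := by
    have hmean : |∫ ω, g ω p.2 ∂P| ≤ C := by
      simpa using norm_integral_le_of_norm_le_const (μ := P) (f := fun ω => g ω p.2)
        (ae_of_all _ fun ω => (hC ω p.2 : ‖g ω p.2‖ ≤ C))
    have hsum : |(∑ k, g (p.1 k) p.2) / K| ≤ C := by
      rw [abs_div, Nat.abs_cast, div_le_iff₀ (by positivity)]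
      calc |∑ k, g (p.1 k) p.2| ≤ ∑ k : Fin K, C :=
            (Finset.abs_sum_le_sum_abs _ _).trans (Finset.sum_le_sum fun k _ => hC _ _)
        _ = C * K := by simp [mul_comm]
    rw [Real.norm_of_nonneg (sq_nonneg _), ← sq_abs]
    gcongr
    linarith [abs_sub _ _ |>.trans (add_le_add hmean hsum)]
  have hH_int : Integrable H (Q.prod μ) :=
    .of_bound hH_meas.aestronglyMeasurable _ (ae_of_all _ hH_bound)
  have hinner (x : X) : ∫ W, H (W, x) ∂Q ≤ C ^ 2 / K := by
    have hbdd : ∀ᵐ ω ∂P, g ω x ∈ Set.Icc (-C) C := ae_of_all _ fun ω => abs_le.mp (hC ω x)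
    have hmeas : Measurable fun ω => g ω x := hg.of_uncurry_right
    rw [integral_sq_integral_sub_empiricalMean
      (memLp_of_bounded hbdd hmeas.aestronglyMeasurable 2) hK]
    gcongr
    simpa using variance_le_sq_of_bounded hbdd hmeas.aemeasurable
  obtain ⟨W, hW⟩ := exists_le_integral hH_int.integral_prod_left
  refine ⟨W, hW.trans ?_⟩
  rw [integral_integral_swap hH_int]
  calc _ ≤ ∫ _, C ^ 2 / K ∂μ :=
        integral_mono hH_int.integral_prod_right (integrable_const _) hinner
    _ = C ^ 2 / K := by simp

end Maurey

section ImportanceSampling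

variable {Ω X : Type*} [MeasurableSpace Ω] [MeasurableSpace X] {ν : Measure Ω} {F : Ω → ℂ}

noncomputable def normDensityMeasure (ν : Measure Ω) (F : Ω → ℂ) : Measure Ω :=
  ν.withDensity fun ω => ENNReal.ofReal (‖F ω‖ / ∫ ω, ‖F ω‖ ∂ν)

lemma isProbabilityMeasure_normDensityMeasure (hF : Integrable F ν)
    (hpos : 0 < ∫ ω, ‖F ω‖ ∂ν) : IsProbabilityMeasure (normDensityMeasure ν F) := by
  constructor
  rw [normDensityMeasure, withDensity_apply _ MeasurableSet.univ, Measure.restrict_univ,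
    ← ofReal_integral_eq_lintegral_ofReal (hF.norm.div_const _)
      (ae_of_all _ fun _ => by positivity),
    integral_div, div_self hpos.ne', ENNReal.ofReal_one]

lemma integral_normDensityMeasure (hF : AEStronglyMeasurable F ν) (h : Ω → ℝ) :
    ∫ ω, h ω ∂normDensityMeasure ν F = ∫ ω, ‖F ω‖ / (∫ ω, ‖F ω‖ ∂ν) * h ω ∂ν := by
  rw [normDensityMeasure, integral_withDensity_eq_integral_toReal_smul₀ (by fun_prop)
    (ae_of_all _ fun _ => ENNReal.ofReal_lt_top)]
  simp_rw [ENNReal.toReal_ofReal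
    (div_nonneg (norm_nonneg _) (integral_nonneg fun _ => norm_nonneg _)), smul_eq_mul]

open Complex in
lemma integral_normDensityMeasure_re_phase_mul (hF : AEStronglyMeasurable F ν)
    (hpos : 0 < ∫ ω, ‖F ω‖ ∂ν) {h : Ω → ℂ} (hFh : Integrable (fun ω => F ω * h ω) ν) :
    ∫ ω, (∫ ω, ‖F ω‖ ∂ν) * (exp (arg (F ω) * I) * h ω).re ∂normDensityMeasure ν F
      = (∫ ω, F ω * h ω ∂ν).re := by
  rw [integral_normDensityMeasure hF, ← RCLike.re_to_complex, ← integral_re hFh]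
  refine integral_congr_ae (ae_of_all _ fun ω => ?_)
  dsimp only
  rw [← mul_assoc, div_mul_cancel₀ _ hpos.ne', ← re_ofReal_mul, ← mul_assoc,
    norm_mul_exp_arg_mul_I]
  rfl

end ImportanceSampling

section FeatureApproximation

variable {Ω X : Type*} [MeasurableSpace Ω] [MeasurableSpace X] {ν : Measure Ω} {F : Ω → ℂ}
  {e : Ω → X → ℂ} (μ : Measure X) [IsProbabilityMeasure μ]

open Complex in
theorem exists_integral_sq_re_sub_re_sum_le_of_measurable (hFm : Measurable F)
    (hF : Integrable F ν) (hpos : 0 < ∫ ω, ‖F ω‖ ∂ν) (he : Measurable (Function.uncurry e))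
    (he_le : ∀ ω x, ‖e ω x‖ ≤ 1) {K : ℕ} (hK : K ≠ 0) :
    ∃ (W : Fin K → Ω) (c : Fin K → ℂ),
      ∫ x, ((∫ ω, F ω * e ω x ∂ν).re - (∑ k, c k * e (W k) x).re) ^ 2 ∂μ
        ≤ (∫ ω, ‖F ω‖ ∂ν) ^ 2 / K := by
  set T := ∫ ω, ‖F ω‖ ∂ν
  have := isProbabilityMeasure_normDensityMeasure hF hpos
  set g : Ω → X → ℝ := fun ω x => T * (exp (arg (F ω) * I) * e ω x).re
  have hg_meas : Measurable (Function.uncurry g) := by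
    have he' : Measurable fun p : Ω × X => e p.1 p.2 := he
    change Measurable fun p : Ω × X => T * (exp (arg (F p.1) * I) * e p.1 p.2).re
    fun_prop
  have hg_le (ω x) : |g ω x| ≤ T := by
    rw [abs_mul, abs_of_pos hpos]
    refine mul_le_of_le_one_right hpos.le ((abs_re_le_norm _).trans ?_)
    rw [norm_mul, norm_exp_ofReal_mul_I, one_mul]
    exact he_le ω x
  have hg_mean (x) : ∫ ω, g ω x ∂normDensityMeasure ν F = (∫ ω, F ω * e ω x ∂ν).re :=
    integral_normDensityMeasure_re_phase_mul hFm.aestronglyMeasurable hpos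
      (hF.mul_bdd he.of_uncurry_right.aestronglyMeasurable (ae_of_all _ fun ω => he_le ω x))
  obtain ⟨W, hW⟩ := exists_integral_sq_integral_sub_empiricalMean_le
    (P := normDensityMeasure ν F) (μ := μ) hg_meas hg_le hK
  refine ⟨W, fun k => ((T / K : ℝ) : ℂ) * exp (arg (F (W k)) * I), ?_⟩
  have hnet (x) : (∑ k, ((T / K : ℝ) : ℂ) * exp (arg (F (W k)) * I) * e (W k) x).re
      = (∑ k, g (W k) x) / K := by
    rw [re_sum, Finset.sum_div]
    refine Finset.sum_congr rfl fun k _ => ?_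
    rw [mul_assoc, re_ofReal_mul]
    ring
  simpa only [hg_mean, hnet] using hW

theorem exists_integral_sq_re_sub_re_sum_le (hF : Integrable F ν) (hpos : 0 < ∫ ω, ‖F ω‖ ∂ν)
    (he : Measurable (Function.uncurry e)) (he_le : ∀ ω x, ‖e ω x‖ ≤ 1) {K : ℕ} (hK : K ≠ 0) :
    ∃ (W : Fin K → Ω) (c : Fin K → ℂ),
      ∫ x, ((∫ ω, F ω * e ω x ∂ν).re - (∑ k, c k * e (W k) x).re) ^ 2 ∂μ
        ≤ (∫ ω, ‖F ω‖ ∂ν) ^ 2 / K := by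
  have hFG := hF.1.ae_eq_mk
  have hnorm : ∫ ω, ‖F ω‖ ∂ν = ∫ ω, ‖hF.1.mk F ω‖ ∂ν := integral_congr_ae (hFG.fun_comp _)
  have hrep (x : X) : ∫ ω, F ω * e ω x ∂ν = ∫ ω, hF.1.mk F ω * e ω x ∂ν :=
    integral_congr_ae (hFG.mul (ae_of_all _ fun _ => rfl))
  rw [hnorm] at hpos ⊢
  simp_rw [hrep]
  exact exists_integral_sq_re_sub_re_sum_le_of_measurable μ hF.1.stronglyMeasurable_mk.measurable
    (hF.congr hFG) hpos he he_le hK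

end FeatureApproximation

/-- Existence of a one-hidden-layer Fourier neural network with generalization error
at most `‖f̂‖²_{L¹}/K`: if `f(x) = ∫ f̂(ω) e^{iω·x} dω` with `f̂ ∈ L¹`, `‖f̂‖_{L¹} > 0`,
and `μ` is a probability measure on `ℝ^d`, then for every `K ≥ 1` there exist
frequencies `ω k` and amplitudes `c k` with
`∫ |f x - Re ∑ k, c k e^{i ω k · x}|² dμ(x) ≤ (∫ |f̂|)² / K`. -/
theorem shallow_network_approximation
    (d : ℕ) (μ : Measure (Fin d → ℝ)) [IsProbabilityMeasure μ]
    (f : (Fin d → ℝ) → ℝ) (fhat : (Fin d → ℝ) → ℂ)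
    (hfhatint : Integrable fhat volume)
    (hf : ∀ x : Fin d → ℝ, (f x : ℂ)
      = ∫ y : Fin d → ℝ, fhat y * Complex.exp (Complex.I * ((∑ i, y i * x i : ℝ) : ℂ)))
    (hpos : 0 < ∫ y, ‖fhat y‖)
    (K : ℕ) (hK : 1 ≤ K) :
    ∃ (ω : Fin K → (Fin d → ℝ)) (c : Fin K → ℂ),
      ∫ x, (f x - (∑ k, c k
          * Complex.exp (Complex.I * ((∑ i, ω k i * x i : ℝ) : ℂ))).re) ^ 2 ∂μ
        ≤ (∫ y, ‖fhat y‖) ^ 2 / K := by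
  have he : Measurable (Function.uncurry fun y x : Fin d → ℝ =>
      Complex.exp (Complex.I * ((∑ i, y i * x i : ℝ) : ℂ))) := by
    change Measurable fun p : (Fin d → ℝ) × (Fin d → ℝ) =>
      Complex.exp (Complex.I * ((∑ i, p.1 i * p.2 i : ℝ) : ℂ))
    fun_prop
  simpa only [← hf, Complex.ofReal_re] using
    exists_integral_sq_re_sub_re_sum_le μ hfhatint hpos he
      (fun _ _ => (Complex.norm_exp_I_mul_ofReal _).le) (Nat.one_le_iff_ne_zero.mp hK)
end

section
/- Let A and B be constants with 0 < B ≤ A. Then the infimum over all measurable functions γ : [0,1] → [0,1] of the (possibly infinite) integral ∫_0^1 ( A γ(t) + B (1 − γ(t))/t ) dt equals B ( 1 + log(A/B) ), and it is attained by the bang-bang control γ(t) = 1_{[0, B/A]}(t). -/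
/-!
Since `A γ + B (1 - γ)/t` is affine in `γ ∈ [0,1]`, it is pointwise at least `min A (B/t)`, and
the bang-bang control, switching off at `t = B/A` where `A = B/t`, attains this minimum at every
`t`. Integrating, `∫_0^1 min A (B/t) dt = A · (B/A) + ∫_{B/A}^1 B/t dt = B + B log (A/B)`.
-/

open MeasureTheory Set

lemma min_le_mul_add_mul_one_sub {a b γ : ℝ} (hγ : γ ∈ Icc (0:ℝ) 1) :
    min a b ≤ a * γ + b * (1 - γ) := by
  have h1 : min a b * γ ≤ a * γ := mul_le_mul_of_nonneg_right (min_le_left a b) hγ.1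
  have h2 : min a b * (1 - γ) ≤ b * (1 - γ) :=
    mul_le_mul_of_nonneg_right (min_le_right a b) (sub_nonneg.mpr hγ.2)
  linarith

lemma min_le_control_cost (A B : ℝ) {γ : ℝ} (t : ℝ) (hγ : γ ∈ Icc (0:ℝ) 1) :
    min A (B / t) ≤ A * γ + B * (1 - γ) / t := by
  rw [mul_div_right_comm]
  exact min_le_mul_add_mul_one_sub hγ

lemma bang_bang_cost_eq_min {A B t : ℝ} (hA : 0 < A) (ht : 0 < t) :
    A * indicator (Icc (0:ℝ) (B / A)) (fun _ => (1:ℝ)) t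
      + B * (1 - indicator (Icc (0:ℝ) (B / A)) (fun _ => (1:ℝ)) t) / t
      = min A (B / t) := by
  by_cases hswitch : t ≤ B / A
  · rw [indicator_of_mem (show t ∈ Icc 0 (B / A) from ⟨ht.le, hswitch⟩), min_eq_left ((le_div_comm₀ hA ht).mpr hswitch)]
    ring
  · rw [indicator_of_notMem fun h => hswitch h.2,
      min_eq_right ((div_le_comm₀ ht hA).mpr (not_le.mp hswitch).le)]
    ring

lemma bang_bang_mem_Icc (c t : ℝ) :
    indicator (Icc (0:ℝ) c) (fun _ => (1:ℝ)) t ∈ Icc (0:ℝ) 1 := by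
  by_cases h : t ∈ Icc (0:ℝ) c <;> simp [h]

lemma setLIntegral_ofReal_const_div_Ioc {a b : ℝ} (B : ℝ) (ha : 0 < a) (hab : a ≤ b)
    (hB : 0 ≤ B) :
    ∫⁻ t in Ioc a b, ENNReal.ofReal (B / t) = ENNReal.ofReal (B * Real.log (b / a)) := by
  have hpos : ∀ t ∈ Ioc a b, 0 < t := fun t ht => ha.trans ht.1
  have hint : IntegrableOn (fun t : ℝ => B / t) (Ioc a b) :=
    (continuousOn_const.div continuousOn_id fun t ht => (ha.trans_le ht.1).ne').integrableOn_Icc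
      |>.mono_set Ioc_subset_Icc_self
  have hnonneg : 0 ≤ᵐ[volume.restrict (Ioc a b)] fun t => B / t :=
    (ae_restrict_iff' measurableSet_Ioc).2 (ae_of_all _ fun t ht => div_nonneg hB (hpos t ht).le)
  rw [← ofReal_integral_eq_lintegral_ofReal hint hnonneg, ← intervalIntegral.integral_of_le hab]
  simp_rw [div_eq_mul_inv B, intervalIntegral.integral_const_mul,
    integral_inv_of_pos ha (ha.trans_le hab)]

lemma setLIntegral_ofReal_min_const_div {A B : ℝ} (hB : 0 < B) (hBA : B ≤ A) :
    ∫⁻ t in Ioc (0:ℝ) 1, ENNReal.ofReal (min A (B / t))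
      = ENNReal.ofReal (B * (1 + Real.log (A / B))) := by
  have hA : 0 < A := hB.trans_le hBA
  have hc : 0 < B / A := div_pos hB hA
  have hc1 : B / A ≤ 1 := (div_le_one hA).mpr hBA
  have hfirst : ∫⁻ t in Ioc 0 (B / A), ENNReal.ofReal (min A (B / t)) = ENNReal.ofReal B := by
    rw [setLIntegral_congr_fun measurableSet_Ioc fun t ht =>
        by rw [min_eq_left ((le_div_comm₀ hA ht.1).mpr ht.2)],
      setLIntegral_const, Real.volume_Ioc, sub_zero, ← ENNReal.ofReal_mul hA.le,
      mul_div_cancel₀ B hA.ne']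
  have hsecond : ∫⁻ t in Ioc (B / A) 1, ENNReal.ofReal (min A (B / t))
      = ENNReal.ofReal (B * Real.log (A / B)) := by
    rw [setLIntegral_congr_fun measurableSet_Ioc fun t ht =>
        by rw [min_eq_right ((div_le_comm₀ (hc.trans ht.1) hA).mpr ht.1.le)],
      setLIntegral_ofReal_const_div_Ioc B hc hc1 hB.le, one_div_div]
  rw [← Ioc_union_Ioc_eq_Ioc hc.le hc1,
    lintegral_union measurableSet_Ioc (Ioc_disjoint_Ioc_of_le le_rfl), hfirst, hsecond,
    ← ENNReal.ofReal_add hB.le (mul_nonneg hB.le (Real.log_nonneg ((one_le_div hB).mpr hBA))),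
    mul_one_add]

/-- Optimal bang-bang control for the time-dependent feature densities: for
`0 < B ≤ A`, the infimum over measurable `γ : [0,1] → [0,1]` of the (possibly
infinite) integral `∫_0^1 (A γ(t) + B (1 - γ(t))/t) dt` equals `B (1 + log (A/B))`,
and it is attained by the bang-bang control `γ = 1_{[0, B/A]}`. -/
theorem bang_bang_optimal_control (A B : ℝ) (hB : 0 < B) (hBA : B ≤ A) :
    (⨅ γ : {γ : ℝ → ℝ // Measurable γ ∧ ∀ t ∈ Set.Icc (0:ℝ) 1, γ t ∈ Set.Icc (0:ℝ) 1},
        ∫⁻ t in Set.Ioc (0:ℝ) 1, ENNReal.ofReal (A * γ.1 t + B * (1 - γ.1 t) / t))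
      = ENNReal.ofReal (B * (1 + Real.log (A / B)))
    ∧ ∫⁻ t in Set.Ioc (0:ℝ) 1,
        ENNReal.ofReal (A * Set.indicator (Set.Icc (0:ℝ) (B / A)) (fun _ => (1:ℝ)) t
          + B * (1 - Set.indicator (Set.Icc (0:ℝ) (B / A)) (fun _ => (1:ℝ)) t) / t)
      = ENNReal.ofReal (B * (1 + Real.log (A / B))) := by
  have hA : 0 < A := hB.trans_le hBA
  have hattained : ∫⁻ t in Ioc (0:ℝ) 1,
      ENNReal.ofReal (A * indicator (Icc (0:ℝ) (B / A)) (fun _ => (1:ℝ)) t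
        + B * (1 - indicator (Icc (0:ℝ) (B / A)) (fun _ => (1:ℝ)) t) / t)
      = ENNReal.ofReal (B * (1 + Real.log (A / B))) := by
    rw [setLIntegral_congr_fun measurableSet_Ioc fun t ht => by rw [bang_bang_cost_eq_min hA ht.1]]
    exact setLIntegral_ofReal_min_const_div hB hBA
  refine ⟨le_antisymm ?_ ?_, hattained⟩
  · exact iInf_le_of_le ⟨_, measurable_const.indicator measurableSet_Icc,
      fun t _ => bang_bang_mem_Icc (B / A) t⟩ hattained.le
  · refine le_iInf fun γ => ?_
    rw [← setLIntegral_ofReal_min_const_div hB hBA]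
    exact setLIntegral_mono' measurableSet_Ioc fun t ht =>
      ENNReal.ofReal_le_ofReal (min_le_control_cost A B t (γ.2.2 t (Ioc_subset_Icc_self ht)))
end
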